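/- Let G be a DAG of width k whose flow reduction admits a minimum flow f* of size k, with level assignment satisfying Invariants A, B, and C. Then the number of distinct layers M_i satisfies M_i ≤ |f*| = k, and the antichain A^0 corresponding to the first layered cut is a maximum antichain of G (of size k, matching Dilworth's theorem). -/
import Mathlib


open Finset

section Prelude

variable {V : Type*}

/-- A (directed) path in the graph with edge relation `E`: nonempty, consecutive
vertices joined by edges, and vertices pairwise distinct. -/
def IsPathOn (E : V → V → Prop) (p : List V) : Prop :=
  p ≠ [] ∧ p.Chain' E ∧ p.Nodup

/-- Reachability in the graph with edge relation `E`. -/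
def Reaches (E : V → V → Prop) : V → V → Prop := Relation.ReflTransGen E

/-- The edges of a path, as the list of consecutive pairs of vertices. -/
def pathEdges (p : List V) : List (V × V) := p.zip p.tail

/-- A path cover: a multiset of paths such that every vertex is on some path. -/
def IsPathCover (E : V → V → Prop) (P : Multiset (List V)) : Prop :=
  (∀ p ∈ P, IsPathOn E p) ∧ ∀ v : V, ∃ p ∈ P, v ∈ p

/-- The width of a graph: the minimum size of a path cover. -/
noncomputable def gwidth (E : V → V → Prop) : ℕ :=
  sInf {n | ∃ P : Multiset (List V), IsPathCover E P ∧ Multiset.card P = n}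

/-- A DAG: no proper (directed) cycles. -/
def IsDAG (E : V → V → Prop) : Prop := ∀ v, ¬ Relation.TransGen E v v

/-- The edge relation of a finite edge set. -/
def edgeRel (E : Finset (V × V)) : V → V → Prop := fun a b => (a, b) ∈ E

/-- Multiplicity of an edge with respect to a multiset of paths. -/
def mult [DecidableEq V] (P : Multiset (List V)) (e : V × V) : ℕ :=
  Multiset.countP (fun p => e ∈ pathEdges p) P

/-- A flow network: a finite edge set, source, sink, and lower bounds (demands). -/
structure FlowNet (V : Type*) where
  E : Finset (V × V)
  s : V
  t : V
  d : V × V → ℕ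

/-- A flow: supported on edges, satisfying the demands, and flow conservation at
every vertex other than the source and the sink. -/
def IsFlow [Fintype V] (N : FlowNet V) (f : V × V → ℕ) : Prop :=
  (∀ e, e ∉ N.E → f e = 0) ∧ (∀ e ∈ N.E, N.d e ≤ f e) ∧
  ∀ v : V, v ≠ N.s → v ≠ N.t → (∑ u : V, f (u, v)) = ∑ u : V, f (v, u)

/-- The size of a flow: net outflow at the source. -/
def flowSize [Fintype V] (N : FlowNet V) (f : V × V → ℕ) : ℤ :=
  (∑ u : V, (f (N.s, u) : ℤ)) - ∑ u : V, (f (u, N.s) : ℤ)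

/-- An `st`-cut, given by the source side `S` (the sink side is the complement). -/
def IsCut (N : FlowNet V) (S : Set V) : Prop := N.s ∈ S ∧ N.t ∉ S

/-- A one-way cut: a cut with no edge crossing from `T = Sᶜ` to `S`. -/
def IsOwCut (N : FlowNet V) (S : Set V) : Prop :=
  IsCut N S ∧ ∀ e ∈ N.E, e.1 ∉ S → e.2 ∉ S

open Classical in
/-- The demand of a cut: sum of demands of edges crossing from `S` to `T`. -/
noncomputable def cutDemand (N : FlowNet V) (S : Set V) : ℕ :=
  ∑ e ∈ N.E.filter (fun e => e.1 ∈ S ∧ e.2 ∉ S), N.d e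

open Classical in
/-- The net flow across a cut: flow from `S` to `T` minus flow from `T` to `S`. -/
noncomputable def cutFlow (N : FlowNet V) (S : Set V) (f : V × V → ℕ) : ℤ :=
  (∑ e ∈ N.E.filter (fun e => e.1 ∈ S ∧ e.2 ∉ S), (f e : ℤ))
    - ∑ e ∈ N.E.filter (fun e => e.1 ∉ S ∧ e.2 ∈ S), (f e : ℤ)

/-- The residual graph of a network w.r.t. a flow `f`: reverse edges of all edges,
plus the edges whose flow strictly exceeds the demand. -/
def ResidualEdge (N : FlowNet V) (f : V × V → ℕ) (u v : V) : Prop :=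
  (v, u) ∈ N.E ∨ ((u, v) ∈ N.E ∧ N.d (u, v) < f (u, v))

/-- Vertices of the flow reduction: two copies of each vertex, plus source/sink. -/
abbrev FR (V : Type*) := (V ⊕ V) ⊕ Bool

def vinF (v : V) : FR V := Sum.inl (Sum.inl v)
def voutF (v : V) : FR V := Sum.inl (Sum.inr v)
def fsrc : FR V := Sum.inr false
def fsnk : FR V := Sum.inr true

/-- Demands of the flow reduction: `1` on each edge `(vin v, vout v)`, else `0`. -/
def redD [DecidableEq V] : FR V × FR V → ℕ
  | (Sum.inl (Sum.inl a), Sum.inl (Sum.inr b)) => if a = b then 1 else 0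
  | _ => 0

/-- The flow reduction of the DAG with edge set `E`. -/
def redNet [Fintype V] [DecidableEq V] (E : Finset (V × V)) : FlowNet (FR V) where
  E := (univ.image fun v : V => (fsrc, vinF v)) ∪ (univ.image fun v : V => (voutF v, fsnk))
        ∪ (univ.image fun v : V => (vinF v, voutF v))
        ∪ (E.image fun e => (voutF e.1, vinF e.2))
  s := fsrc
  t := fsnk
  d := redD

/-- The layered cut `L^{≤ l}`: the source together with all split vertices of level `≤ l`. -/
def layerCut (ℓ : FR V → ℤ) (l : ℤ) : Set (FR V) :=
  {x | x = fsrc ∨ ((∃ v : V, x = vinF v ∨ x = voutF v) ∧ ℓ x ≤ l)}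

open Classical in
/-- The layered antichain `A^l`. -/
noncomputable def layerAntichain [Fintype V] (ℓ : FR V → ℤ) (l : ℤ) : Finset V :=
  univ.filter (fun v => ℓ (vinF v) ≤ l ∧ l < ℓ (voutF v))

end Prelude

section AuxProof

set_option linter.unusedSectionVars false

open Classical Finset

variable {V : Type*} [Fintype V] [DecidableEq V]

lemma vinF_ne_fsrc (v : V) : vinF v ≠ fsrc := by simp [vinF, fsrc]
lemma vinF_ne_fsnk (v : V) : vinF v ≠ fsnk := by simp [vinF, fsnk]
lemma voutF_ne_fsrc (v : V) : voutF v ≠ fsrc := by simp [voutF, fsrc]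
lemma voutF_ne_fsnk (v : V) : voutF v ≠ fsnk := by simp [voutF, fsnk]

lemma memE1 (E : Finset (V × V)) (v : V) : (fsrc, vinF v) ∈ (redNet E).E := by
  simp only [redNet, Finset.mem_union, Finset.mem_image]
  exact Or.inl (Or.inl (Or.inl ⟨v, Finset.mem_univ v, rfl⟩))

lemma memE3 (E : Finset (V × V)) (v : V) : (vinF v, voutF v) ∈ (redNet E).E := by
  simp only [redNet, Finset.mem_union, Finset.mem_image]
  exact Or.inl (Or.inr ⟨v, Finset.mem_univ v, rfl⟩)

lemma memE4 (E : Finset (V × V)) {a b : V} (h : (a, b) ∈ E) :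
    (voutF a, vinF b) ∈ (redNet E).E := by
  simp only [redNet, Finset.mem_union, Finset.mem_image]
  exact Or.inr ⟨(a, b), h, rfl⟩

lemma memE_elim {E : Finset (V × V)} {e : FR V × FR V} (he : e ∈ (redNet E).E) :
    (∃ v : V, e = (fsrc, vinF v)) ∨ (∃ v : V, e = (voutF v, fsnk)) ∨
    (∃ v : V, e = (vinF v, voutF v)) ∨ (∃ a b : V, (a, b) ∈ E ∧ e = (voutF a, vinF b)) := by
  simp only [redNet, Finset.mem_union, Finset.mem_image, Finset.mem_univ, true_and] at he
  rcases he with ((⟨v, hv⟩ | ⟨v, hv⟩) | ⟨v, hv⟩) | ⟨a, ha, hv⟩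
  · exact Or.inl ⟨v, hv.symm⟩
  · exact Or.inr (Or.inl ⟨v, hv.symm⟩)
  · exact Or.inr (Or.inr (Or.inl ⟨v, hv.symm⟩))
  · exact Or.inr (Or.inr (Or.inr ⟨a.1, a.2, ha, hv.symm⟩))

lemma mem_layerCut_vin {ℓ : FR V → ℤ} {l : ℤ} {v : V} :
    vinF v ∈ layerCut ℓ l ↔ ℓ (vinF v) ≤ l := by
  constructor
  · intro h
    simp only [layerCut, Set.mem_setOf_eq] at h
    rcases h with h | ⟨-, h⟩
    · exact absurd h (vinF_ne_fsrc v)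
    · exact h
  · exact fun h => Or.inr ⟨⟨v, Or.inl rfl⟩, h⟩

lemma mem_layerCut_vout {ℓ : FR V → ℤ} {l : ℤ} {v : V} :
    voutF v ∈ layerCut ℓ l ↔ ℓ (voutF v) ≤ l := by
  constructor
  · intro h
    simp only [layerCut, Set.mem_setOf_eq] at h
    rcases h with h | ⟨-, h⟩
    · exact absurd h (voutF_ne_fsrc v)
    · exact h
  · exact fun h => Or.inr ⟨⟨v, Or.inr rfl⟩, h⟩

lemma fsrc_mem_layerCut {ℓ : FR V → ℤ} {l : ℤ} : fsrc ∈ layerCut ℓ l := Or.inl rfl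

lemma fsnk_notMem_layerCut {ℓ : FR V → ℤ} {l : ℤ} : fsnk ∉ layerCut ℓ l := by
  intro h
  simp only [layerCut, Set.mem_setOf_eq] at h
  rcases h with h | ⟨⟨v, h | h⟩, -⟩
  · exact absurd h (by simp [fsnk, fsrc])
  · exact (vinF_ne_fsnk v) h.symm
  · exact (voutF_ne_fsnk v) h.symm

lemma vio_inj : Function.Injective (fun v : V => (vinF v, voutF v)) := by
  intro a b h
  simpa [vinF, voutF, Prod.ext_iff] using h

lemma demandFilter_eq_image (ℓ : FR V → ℤ) (l : ℤ) :
    ((univ.image fun v : V => (vinF v, voutF v)).filter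
        (fun e => e.1 ∈ layerCut ℓ l ∧ e.2 ∉ layerCut ℓ l))
      = (layerAntichain ℓ l).image (fun v => (vinF v, voutF v)) := by
  ext e
  constructor
  · intro he
    obtain ⟨hD, h1, h2⟩ := Finset.mem_filter.1 he
    rcases Finset.mem_image.1 hD with ⟨v, -, rfl⟩
    refine Finset.mem_image.2 ⟨v, Finset.mem_filter.2 ⟨Finset.mem_univ v, ?_, ?_⟩, rfl⟩
    · exact mem_layerCut_vin.1 h1
    · exact lt_of_not_ge (fun hle => h2 (mem_layerCut_vout.2 hle))
  · intro he
    rcases Finset.mem_image.1 he with ⟨v, hv, rfl⟩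
    obtain ⟨-, h1, h2⟩ := Finset.mem_filter.1 hv
    refine Finset.mem_filter.2 ⟨Finset.mem_image.2 ⟨v, Finset.mem_univ v, rfl⟩, ?_, ?_⟩
    · exact mem_layerCut_vin.2 h1
    · exact fun hm => absurd (mem_layerCut_vout.1 hm) (not_le.2 h2)

lemma cutDemand_eq_card (E : Finset (V × V)) (ℓ : FR V → ℤ) (l : ℤ) :
    cutDemand (redNet E) (layerCut ℓ l) = (layerAntichain ℓ l).card := by
  unfold cutDemand
  have hsub : ((univ.image fun v : V => (vinF v, voutF v)).filter
        (fun e => e.1 ∈ layerCut ℓ l ∧ e.2 ∉ layerCut ℓ l))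
      ⊆ (redNet E).E.filter (fun e => e.1 ∈ layerCut ℓ l ∧ e.2 ∉ layerCut ℓ l) :=
    Finset.filter_subset_filter _ (fun e he => by
      rcases Finset.mem_image.1 he with ⟨v, -, rfl⟩; exact memE3 E v)
  have hzero : ∀ e ∈ (redNet E).E.filter (fun e => e.1 ∈ layerCut ℓ l ∧ e.2 ∉ layerCut ℓ l),
      e ∉ ((univ.image fun v : V => (vinF v, voutF v)).filter
        (fun e => e.1 ∈ layerCut ℓ l ∧ e.2 ∉ layerCut ℓ l)) → (redNet E).d e = 0 := by
    intro e he hne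
    obtain ⟨heE, hP⟩ := Finset.mem_filter.1 he
    rcases memE_elim heE with ⟨v, rfl⟩ | ⟨v, rfl⟩ | ⟨v, rfl⟩ | ⟨a, b, hab, rfl⟩
    · rfl
    · rfl
    · exact (hne (Finset.mem_filter.2
        ⟨Finset.mem_image.2 ⟨v, Finset.mem_univ v, rfl⟩, hP⟩)).elim
    · rfl
  rw [← Finset.sum_subset hsub hzero, demandFilter_eq_image,
    Finset.sum_image (fun a _ b _ h => vio_inj h)]
  have hone : ∀ v ∈ layerAntichain ℓ l, (redNet E).d (vinF v, voutF v) = 1 := by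
    intro v _
    simp [redNet, redD, vinF, voutF]
  rw [Finset.sum_congr rfl hone, Finset.sum_const, smul_eq_mul, mul_one]

lemma cutFlow_eq_flowSize {W : Type*} [Fintype W] (N : FlowNet W) (f : W × W → ℕ)
    (hf : IsFlow N f) (S : Set W) (hs : N.s ∈ S) (ht : N.t ∉ S) :
    cutFlow N S f = flowSize N f := by
  have hsum : ∑ v ∈ univ.filter (· ∈ S),
      ((∑ u : W, (f (v, u) : ℤ)) - ∑ u : W, (f (u, v) : ℤ)) = flowSize N f := by
    refine Finset.sum_eq_single_of_mem N.s
      (Finset.mem_filter.2 ⟨Finset.mem_univ _, hs⟩) ?_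
    intro v hv hvs
    have hvt : v ≠ N.t := fun h => ht (h ▸ (Finset.mem_filter.1 hv).2)
    have hcons := hf.2.2 v hvs hvt
    have h2 : (∑ u : W, (f (u, v) : ℤ)) = ∑ u : W, (f (v, u) : ℤ) := by
      exact_mod_cast hcons
    rw [h2, sub_self]
  have h3 : ∑ e ∈ N.E.filter (fun e => e.1 ∈ S ∧ e.2 ∉ S), (f e : ℤ)
      = ∑ v ∈ univ.filter (· ∈ S), ∑ u ∈ univ.filter (fun u => u ∉ S), (f (v, u) : ℤ) := by
    rw [← Finset.sum_product']
    apply Finset.sum_subset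
    · intro e he
      obtain ⟨-, h1, h2⟩ := Finset.mem_filter.1 he
      exact Finset.mem_product.2 ⟨Finset.mem_filter.2 ⟨Finset.mem_univ _, h1⟩,
        Finset.mem_filter.2 ⟨Finset.mem_univ _, h2⟩⟩
    · intro e he hne
      obtain ⟨he1, he2⟩ := Finset.mem_product.1 he
      have hP : e.1 ∈ S ∧ e.2 ∉ S := ⟨(Finset.mem_filter.1 he1).2, (Finset.mem_filter.1 he2).2⟩
      have heE : e ∉ N.E := fun hE => hne (Finset.mem_filter.2 ⟨hE, hP⟩)
      simp [hf.1 e heE]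
  have h4 : ∑ e ∈ N.E.filter (fun e => e.1 ∉ S ∧ e.2 ∈ S), (f e : ℤ)
      = ∑ v ∈ univ.filter (· ∈ S), ∑ u ∈ univ.filter (fun u => u ∉ S), (f (u, v) : ℤ) := by
    rw [Finset.sum_comm, ← Finset.sum_product']
    apply Finset.sum_subset
    · intro e he
      obtain ⟨-, h1, h2⟩ := Finset.mem_filter.1 he
      exact Finset.mem_product.2 ⟨Finset.mem_filter.2 ⟨Finset.mem_univ _, h1⟩,
        Finset.mem_filter.2 ⟨Finset.mem_univ _, h2⟩⟩
    · intro e he hne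
      obtain ⟨he1, he2⟩ := Finset.mem_product.1 he
      have hP : e.1 ∉ S ∧ e.2 ∈ S := ⟨(Finset.mem_filter.1 he1).2, (Finset.mem_filter.1 he2).2⟩
      have heE : e ∉ N.E := fun hE => hne (Finset.mem_filter.2 ⟨hE, hP⟩)
      simp [hf.1 e heE]
  have hsplit1 : ∑ v ∈ univ.filter (· ∈ S), ∑ u : W, (f (v, u) : ℤ)
      = (∑ v ∈ univ.filter (· ∈ S), ∑ u ∈ univ.filter (· ∈ S), (f (v, u) : ℤ))
        + ∑ v ∈ univ.filter (· ∈ S), ∑ u ∈ univ.filter (fun u => u ∉ S), (f (v, u) : ℤ) := by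
    rw [← Finset.sum_add_distrib]
    exact Finset.sum_congr rfl fun v _ =>
      (Finset.sum_filter_add_sum_filter_not univ (· ∈ S) _).symm
  have hsplit2 : ∑ v ∈ univ.filter (· ∈ S), ∑ u : W, (f (u, v) : ℤ)
      = (∑ v ∈ univ.filter (· ∈ S), ∑ u ∈ univ.filter (· ∈ S), (f (u, v) : ℤ))
        + ∑ v ∈ univ.filter (· ∈ S), ∑ u ∈ univ.filter (fun u => u ∉ S), (f (u, v) : ℤ) := by
    rw [← Finset.sum_add_distrib]
    exact Finset.sum_congr rfl fun v _ =>
      (Finset.sum_filter_add_sum_filter_not univ (· ∈ S) _).symm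
  have hAA : (∑ v ∈ univ.filter (· ∈ S), ∑ u ∈ univ.filter (· ∈ S), (f (v, u) : ℤ))
      = ∑ v ∈ univ.filter (· ∈ S), ∑ u ∈ univ.filter (· ∈ S), (f (u, v) : ℤ) :=
    Finset.sum_comm
  rw [← hsum, Finset.sum_sub_distrib, hsplit1, hsplit2, hAA]
  unfold cutFlow
  rw [h3, h4]
  ring

lemma chain_reach_head {α : Type*} {R : α → α → Prop} :
    ∀ (l : List α) (a : α), List.Chain R a l → ∀ w ∈ l, Relation.ReflTransGen R a w := by
  intro l
  induction l with
  | nil => intro a _ w hw; cases hw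
  | cons b t ih =>
    intro a hc w hw
    rcases List.chain_cons.1 hc with ⟨hab, hbt⟩
    rcases List.mem_cons.1 hw with rfl | hw
    · exact Relation.ReflTransGen.single hab
    · exact (Relation.ReflTransGen.single hab).trans (ih b hbt w hw)

lemma chain'_reach {α : Type*} {R : α → α → Prop} :
    ∀ (l : List α), l.Chain' R → ∀ u ∈ l, ∀ w ∈ l,
      Relation.ReflTransGen R u w ∨ Relation.ReflTransGen R w u := by
  intro l
  induction l with
  | nil => intro _ u hu; cases hu
  | cons a t ih =>
    intro hc u hu w hw
    have hc1 : List.Chain R a t := hc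
    rcases List.mem_cons.1 hu with hu' | hu'
    · subst hu'
      rcases List.mem_cons.1 hw with hw' | hw'
      · subst hw'
        exact Or.inl Relation.ReflTransGen.refl
      · exact Or.inl (chain_reach_head t _ hc1 w hw')
    · rcases List.mem_cons.1 hw with hw' | hw'
      · subst hw'
        exact Or.inr (chain_reach_head t _ hc1 u hu')
      · exact ih hc.tail u hu' w hw'

lemma exists_no_out {α : Type*} [Fintype α] {r : α → α → Prop}
    (hi : ∀ v, ¬ Relation.TransGen r v v) (s : Finset α) (hs : s.Nonempty) :
    ∃ v ∈ s, ∀ w ∈ s, ¬ r v w := by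
  haveI : IsTrans α (fun a b => Relation.TransGen r b a) :=
    ⟨fun a b c h1 h2 => Relation.TransGen.trans h2 h1⟩
  haveI : IsIrrefl α (fun a b => Relation.TransGen r b a) := ⟨fun a h => hi a h⟩
  obtain ⟨v, hv, hmin⟩ := (Finite.wellFounded_of_trans_of_irrefl
    (fun a b => Relation.TransGen r b a)).has_min ↑s (Finset.coe_nonempty.2 hs)
  exact ⟨v, Finset.mem_coe.1 hv, fun w hw hrw =>
    hmin w (Finset.mem_coe.2 hw) (Relation.TransGen.single hrw)⟩

lemma exists_cover (E : Finset (V × V)) :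
    ∃ P : Multiset (List V), IsPathCover (edgeRel E) P ∧
      Multiset.card P = gwidth (edgeRel E) := by
  have hne : {n | ∃ P : Multiset (List V), IsPathCover (edgeRel E) P ∧
      Multiset.card P = n}.Nonempty := by
    refine ⟨Multiset.card (Multiset.map (fun v : V => [v]) Finset.univ.val),
      Multiset.map (fun v : V => [v]) Finset.univ.val, ⟨?_, ?_⟩, rfl⟩
    · intro p hp
      rcases Multiset.mem_map.1 hp with ⟨v, -, rfl⟩
      exact ⟨by simp, List.isChain_singleton v, List.nodup_singleton v⟩
    · intro v
      exact ⟨[v], Multiset.mem_map_of_mem _ (Finset.mem_univ v), by simp⟩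
  exact Nat.sInf_mem hne

lemma antichain_le_cover {E : Finset (V × V)} {A : Finset V}
    (hA : ∀ u ∈ A, ∀ w ∈ A, u ≠ w → ¬ Reaches (edgeRel E) u w)
    {P : Multiset (List V)} (hP : IsPathCover (edgeRel E) P) :
    A.card ≤ Multiset.card P := by
  choose g hg1 hg2 using hP.2
  have hinj : Set.InjOn g ↑A := by
    intro u hu w hw hgw
    by_contra hne
    have hw' : w ∈ g u := by rw [hgw]; exact hg2 w
    rcases chain'_reach (g u) ((hP.1 _ (hg1 u)).2.1) u (hg2 u) w hw' with h | h
    · exact hA u hu w hw hne h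
    · exact hA w hw u hu (Ne.symm hne) h
  calc A.card = (A.image g).card := (Finset.card_image_of_injOn hinj).symm
    _ ≤ P.toFinset.card := Finset.card_le_card (by
        intro p hp
        rcases Finset.mem_image.1 hp with ⟨a, -, rfl⟩
        exact Multiset.mem_toFinset.2 (hg1 a))
    _ ≤ Multiset.card P := Multiset.toFinset_card_le P

end AuxProof

/-- for a width-`k` DAG with a minimum flow of size `k` and level
assignment satisfying Invariants A, B, C, the number of layers satisfies `M ≤ k`,
and `A^0` is a maximum antichain of size `k` (Dilworth). -/
theorem stmt_19 {V : Type*} [Fintype V] [DecidableEq V] (E : Finset (V × V))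
    (hdag : IsDAG (edgeRel E)) (k : ℕ) (hw : gwidth (edgeRel E) = k)
    (f : FR V × FR V → ℕ) (hf : IsFlow (redNet E) f)
    (hmin : ∀ g, IsFlow (redNet E) g → flowSize (redNet E) f ≤ flowSize (redNet E) g)
    (hsize : flowSize (redNet E) f = k)
    (ℓ : FR V → ℤ) (hnn : ∀ v : V, 0 ≤ ℓ (vinF v) ∧ 0 ≤ ℓ (voutF v))
    (invA : ∀ x y : FR V, ResidualEdge (redNet E) f x y →
      x ≠ fsrc → x ≠ fsnk → y ≠ fsrc → y ≠ fsnk → ℓ y ≤ ℓ x)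
    (invB1 : ∀ v : V, 0 < f (voutF v, fsnk) →
      f (voutF v, fsnk) = 1 ∧ ℓ (vinF v) < ℓ (voutF v))
    (invB2 : ∀ v : V, 0 < f (fsrc, vinF v) → ℓ (vinF v) = 0)
    (M : ℕ) (hMb : ∀ v : V, ℓ (vinF v) ≤ (M : ℤ) ∧ ℓ (voutF v) ≤ (M : ℤ))
    (hMa : M = 0 ∨ ∃ v : V, ℓ (vinF v) = (M : ℤ) ∨ ℓ (voutF v) = (M : ℤ))
    (invC : ∀ l l' : ℤ, 0 ≤ l → l < l' → l' ≤ (M : ℤ) - 1 →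
      cutDemand (redNet E) (layerCut ℓ l') < cutDemand (redNet E) (layerCut ℓ l)) :
    M ≤ k ∧
    (∀ u ∈ layerAntichain ℓ 0, ∀ w ∈ layerAntichain ℓ 0,
      u ≠ w → ¬ Reaches (edgeRel E) u w) ∧
    (layerAntichain ℓ 0).card = k ∧
    ∀ A : Finset V, (∀ u ∈ A, ∀ w ∈ A, u ≠ w → ¬ Reaches (edgeRel E) u w) →
      A.card ≤ (layerAntichain ℓ 0).card := by
  classical
  -- basic monotonicity of levels along network edges
  have hmono1 : ∀ v : V, ℓ (vinF v) ≤ ℓ (voutF v) := fun v =>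
    invA (voutF v) (vinF v) (Or.inl (memE3 E v)) (voutF_ne_fsrc v) (voutF_ne_fsnk v)
      (vinF_ne_fsrc v) (vinF_ne_fsnk v)
  have hmono2 : ∀ a b : V, (a, b) ∈ E → ℓ (voutF a) ≤ ℓ (vinF b) := fun a b h =>
    invA (vinF b) (voutF a) (Or.inl (memE4 E h)) (vinF_ne_fsrc b) (vinF_ne_fsnk b)
      (voutF_ne_fsrc a) (voutF_ne_fsnk a)
  have hAA : ∀ a b : V, (a, b) ∈ E → 0 < f (voutF a, vinF b) →
      ℓ (vinF b) ≤ ℓ (voutF a) := by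
    intro a b hab hpos
    refine invA _ _ (Or.inr ⟨memE4 E hab, ?_⟩) (voutF_ne_fsrc a) (voutF_ne_fsnk a)
      (vinF_ne_fsrc b) (vinF_ne_fsnk b)
    have hd : (redNet E).d (voutF a, vinF b) = 0 := rfl
    rw [hd]; exact hpos
  have hdem1 : ∀ v : V, 1 ≤ f (vinF v, voutF v) := by
    intro v
    have h := hf.2.1 _ (memE3 E v)
    simpa [redNet, redD, vinF, voutF] using h
  have hf1 : ∀ v : V, ℓ (vinF v) ≤ 0 → 0 < ℓ (voutF v) → f (vinF v, voutF v) = 1 := by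
    intro v h1 h2
    by_contra h
    have hgt : (redNet E).d (vinF v, voutF v) < f (vinF v, voutF v) := by
      have hd : (redNet E).d (vinF v, voutF v) = 1 := by simp [redNet, redD, vinF, voutF]
      have := hdem1 v
      omega
    have hle := invA (vinF v) (voutF v) (Or.inr ⟨memE3 E v, hgt⟩) (vinF_ne_fsrc v)
      (vinF_ne_fsnk v) (voutF_ne_fsrc v) (voutF_ne_fsnk v)
    linarith
  -- part 2 : A^0 is an antichain
  have hreach : ∀ a b : V, Relation.TransGen (edgeRel E) a b →
      ℓ (voutF a) ≤ ℓ (vinF b) := by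
    intro a b h
    induction h with
    | single h' => exact hmono2 _ _ h'
    | tail h' e ih => exact le_trans ih (le_trans (hmono1 _) (hmono2 _ _ e))
  have antich : ∀ u ∈ layerAntichain ℓ 0, ∀ w ∈ layerAntichain ℓ 0,
      u ≠ w → ¬ Reaches (edgeRel E) u w := by
    intro u hu w hw hne hr
    obtain ⟨-, hu1, hu2⟩ := Finset.mem_filter.1 hu
    obtain ⟨-, hw1, hw2⟩ := Finset.mem_filter.1 hw
    have ht : Relation.TransGen (edgeRel E) u w := by
      rcases (Relation.reflTransGen_iff_eq_or_transGen.1 hr) with h | h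
      · exact absurd h.symm hne
      · exact h
    have := hreach u w ht
    linarith
  -- part 3 : |A^0| = k
  have hQempty : (redNet E).E.filter
      (fun e => e.1 ∉ layerCut ℓ 0 ∧ e.2 ∈ layerCut ℓ 0) = ∅ := by
    rw [Finset.filter_eq_empty_iff]
    intro e he h
    obtain ⟨h1, h2⟩ := h
    rcases memE_elim he with ⟨v, rfl⟩ | ⟨v, rfl⟩ | ⟨v, rfl⟩ | ⟨a, b, hab, rfl⟩
    · exact h1 fsrc_mem_layerCut
    · exact fsnk_notMem_layerCut h2
    · exact h1 (mem_layerCut_vin.2 (le_trans (hmono1 v) (mem_layerCut_vout.1 h2)))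
    · exact h1 (mem_layerCut_vout.2 (le_trans (hmono2 a b hab) (mem_layerCut_vin.1 h2)))
  have hPsum : ∑ e ∈ (redNet E).E.filter
        (fun e => e.1 ∈ layerCut ℓ 0 ∧ e.2 ∉ layerCut ℓ 0), (f e : ℤ)
      = ((layerAntichain ℓ 0).card : ℤ) := by
    have hsub : ((univ.image fun v : V => (vinF v, voutF v)).filter
          (fun e => e.1 ∈ layerCut ℓ 0 ∧ e.2 ∉ layerCut ℓ 0))
        ⊆ (redNet E).E.filter (fun e => e.1 ∈ layerCut ℓ 0 ∧ e.2 ∉ layerCut ℓ 0) :=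
      Finset.filter_subset_filter _ (fun e he => by
        rcases Finset.mem_image.1 he with ⟨v, -, rfl⟩; exact memE3 E v)
    have hzero : ∀ e ∈ (redNet E).E.filter
        (fun e => e.1 ∈ layerCut ℓ 0 ∧ e.2 ∉ layerCut ℓ 0),
        e ∉ ((univ.image fun v : V => (vinF v, voutF v)).filter
          (fun e => e.1 ∈ layerCut ℓ 0 ∧ e.2 ∉ layerCut ℓ 0)) → (f e : ℤ) = 0 := by
      intro e he hne
      obtain ⟨heE, hP⟩ := Finset.mem_filter.1 he
      rw [Nat.cast_eq_zero]
      rcases memE_elim heE with ⟨v, rfl⟩ | ⟨v, rfl⟩ | ⟨v, rfl⟩ | ⟨a, b, hab, rfl⟩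
      · by_contra h
        exact (fun hl => hP.2 (mem_layerCut_vin.2 hl))
          (le_of_eq (invB2 v (Nat.pos_of_ne_zero h)))
      · by_contra h
        obtain ⟨-, hlt⟩ := invB1 v (Nat.pos_of_ne_zero h)
        have h1 : ℓ (voutF v) ≤ 0 := mem_layerCut_vout.1 hP.1
        linarith [(hnn v).1]
      · exact (hne (Finset.mem_filter.2
          ⟨Finset.mem_image.2 ⟨v, Finset.mem_univ v, rfl⟩, hP⟩)).elim
      · by_contra h
        have h1 : ℓ (voutF a) ≤ 0 := mem_layerCut_vout.1 hP.1
        exact (fun hl => hP.2 (mem_layerCut_vin.2 hl))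
          (le_trans (hAA a b hab (Nat.pos_of_ne_zero h)) h1)
    rw [← Finset.sum_subset hsub hzero, demandFilter_eq_image,
      Finset.sum_image (fun a _ b _ h => vio_inj h)]
    have hone : ∀ v ∈ layerAntichain ℓ 0, (f (vinF v, voutF v) : ℤ) = 1 := by
      intro v hv
      obtain ⟨-, h1, h2⟩ := Finset.mem_filter.1 hv
      exact_mod_cast hf1 v h1 h2
    rw [Finset.sum_congr rfl hone, Finset.sum_const, nsmul_eq_mul, mul_one]
  have hcard : (layerAntichain ℓ 0).card = k := by
    have h1 : cutFlow (redNet E) (layerCut ℓ 0) f = flowSize (redNet E) f :=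
      cutFlow_eq_flowSize _ f hf _ fsrc_mem_layerCut fsnk_notMem_layerCut
    have h2 : cutFlow (redNet E) (layerCut ℓ 0) f = ((layerAntichain ℓ 0).card : ℤ) := by
      unfold cutFlow
      rw [hQempty, Finset.sum_empty, sub_zero, hPsum]
    have := h2.symm.trans (h1.trans hsize)
    exact_mod_cast this
  -- part 1 : M ≤ k
  have hMk : M ≤ k := by
    rcases Nat.eq_zero_or_pos M with hM0 | hM1
    · omega
    · have hv0 : ∃ v : V, ℓ (voutF v) = (M : ℤ) := by
        rcases hMa with h0 | ⟨v, hv | hv⟩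
        · omega
        · exact ⟨v, le_antisymm (hMb v).2 (hv ▸ hmono1 v)⟩
        · exact ⟨v, hv⟩
      obtain ⟨v0, hv0'⟩ := hv0
      obtain ⟨vm, hvmem, hvmax⟩ := exists_no_out (r := edgeRel E) hdag
        (univ.filter fun v => ℓ (voutF v) = (M : ℤ))
        ⟨v0, Finset.mem_filter.2 ⟨Finset.mem_univ _, hv0'⟩⟩
      have hvM : ℓ (voutF vm) = (M : ℤ) := (Finset.mem_filter.1 hvmem).2
      have hcons := hf.2.2 (voutF vm) (voutF_ne_fsrc vm) (voutF_ne_fsnk vm)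
      have hin : 1 ≤ ∑ u : FR V, f (u, voutF vm) :=
        le_trans (hdem1 vm) (Finset.single_le_sum (f := fun u => f (u, voutF vm))
          (fun i _ => Nat.zero_le _) (Finset.mem_univ (vinF vm)))
      have hout : ∃ u : FR V, 0 < f (voutF vm, u) := by
        by_contra h
        push_neg at h
        have hz : ∑ u : FR V, f (voutF vm, u) = 0 :=
          Finset.sum_eq_zero fun u _ => Nat.le_zero.1 (h u)
        omega
      obtain ⟨u, hu⟩ := hout
      have huE : (voutF vm, u) ∈ (redNet E).E := by
        by_contra h
        rw [hf.1 _ h] at hu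
        exact lt_irrefl 0 hu
      have hcross : ∃ w : V, ℓ (vinF w) ≤ (M : ℤ) - 1 ∧ (M : ℤ) - 1 < ℓ (voutF w) := by
        rcases memE_elim huE with ⟨w, hw⟩ | ⟨w, hw⟩ | ⟨w, hw⟩ | ⟨a, b, hab, hw⟩
        · exact absurd (congrArg Prod.fst hw) (by simp [voutF, fsrc])
        · have h1 : voutF vm = voutF w := congrArg Prod.fst hw
          have h2 : u = fsnk := congrArg Prod.snd hw
          have hww : vm = w := by simpa [voutF] using h1
          rw [h2] at hu
          obtain ⟨-, hlt⟩ := invB1 vm hu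
          exact ⟨vm, by omega, by omega⟩
        · exact absurd (congrArg Prod.fst hw) (by simp [voutF, vinF])
        · have h1 : voutF vm = voutF a := congrArg Prod.fst hw
          have h2 : u = vinF b := congrArg Prod.snd hw
          have haa : vm = a := by simpa [voutF] using h1
          subst haa
          rw [h2] at hu
          have hba : ℓ (vinF b) ≤ ℓ (voutF vm) := hAA vm b hab hu
          have hbb : ℓ (voutF vm) ≤ ℓ (vinF b) := hmono2 vm b hab
          have hbM : ℓ (voutF b) = (M : ℤ) := by
            have h3 := hmono1 b
            have h4 := (hMb b).2
            omega
          exact absurd hab (hvmax b (Finset.mem_filter.2 ⟨Finset.mem_univ _, hbM⟩))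
      obtain ⟨w, hw1, hw2⟩ := hcross
      have hApos : 0 < (layerAntichain ℓ ((M : ℤ) - 1)).card :=
        Finset.card_pos.2 ⟨w, Finset.mem_filter.2 ⟨Finset.mem_univ _, hw1, hw2⟩⟩
      have hd1 : 1 ≤ cutDemand (redNet E) (layerCut ℓ ((M : ℤ) - 1)) := by
        rw [cutDemand_eq_card]
        omega
      have hd0 : cutDemand (redNet E) (layerCut ℓ 0) = k := by
        rw [cutDemand_eq_card, hcard]
      have hchain : ∀ n : ℕ, (n : ℤ) ≤ (M : ℤ) - 1 →
          cutDemand (redNet E) (layerCut ℓ (n : ℤ)) + n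
            ≤ cutDemand (redNet E) (layerCut ℓ 0) := by
        intro n
        induction n with
        | zero => intro _; simp
        | succ n ih =>
          intro hn
          have hlt := invC (n : ℤ) ((n + 1 : ℕ) : ℤ) (Int.natCast_nonneg n)
            (by push_cast; omega) hn
          have hihn := ih (by push_cast at hn ⊢; omega)
          omega
      have hfin := hchain (M - 1) (by omega)
      have hcast : (((M - 1 : ℕ)) : ℤ) = (M : ℤ) - 1 := by omega
      rw [hcast] at hfin
      omega
  -- part 4 : maximality
  have hmax : ∀ A : Finset V, (∀ u ∈ A, ∀ w ∈ A, u ≠ w → ¬ Reaches (edgeRel E) u w) →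
      A.card ≤ (layerAntichain ℓ 0).card := by
    intro A hA
    obtain ⟨P, hPc, hPcard⟩ := exists_cover E
    have h1 := antichain_le_cover hA hPc
    rw [hPcard, hw] at h1
    omega
  exact ⟨hMk, antich, hcard, hmax⟩
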